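/- arXiv:2111.07099 — 3 statements merged into one kernel-verified Lean document; each statement's English description precedes it below -/
import Mathlib

section
/- Consider a game with players indexed by a type ι, action sets Γ_i, joint action space Γ = ∏_i Γ_i, metric maps m_i : Γ → O_i, and a preorder ≾_i with strict part ≺_i on each O_i. Suppose there is a set P with a preorder whose strict part is ≺_P, and a potential function Pot : Γ → P such that for every player i, every γ ∈ Γ, and every alternative action γ′_i ∈ Γ_i, if m_i(γ′_i, γ_{-i}) ≺_i m_i(γ) then Pot(γ′_i, γ_{-i}) ≺_P Pot(γ). Then any γ* ∈ Γ such that no γ ∈ Γ satisfies Pot(γ) ≺_P Pot(γ*) is a weak Nash equilibrium, i.e., for every player i and every γ′_i ∈ Γ_i it is not the case that m_i(γ′_i, γ*_{-i}) ≺_i m_i(γ*). -/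
/-- The strict part of a binary relation: `a ≺ b` iff `a ≾ b` and `¬ b ≾ a`. -/
def strictPart {O : Type*} (r : O → O → Prop) (a b : O) : Prop :=
  r a b ∧ ¬ r b a

/-- If `Pot` is a posetal potential for the game (any strictly improving
unilateral deviation strictly decreases `Pot` in the strict part of a preorder on `P`),
then any profile `γ*` that is minimal for the potential (no profile has strictly smaller
potential) is a weak Nash equilibrium. -/
theorem stmt_6 {ι : Type*} [DecidableEq ι] {Γ O : ι → Type*} {P : Type*}
    (m : ∀ i : ι, (∀ j : ι, Γ j) → O i)
    (r : ∀ i : ι, O i → O i → Prop)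
    (hrefl : ∀ i, Reflexive (r i)) (htrans : ∀ i, Transitive (r i))
    (rP : P → P → Prop) (hreflP : Reflexive rP) (htransP : Transitive rP)
    (Pot : (∀ j : ι, Γ j) → P)
    (hPot : ∀ (i : ι) (γ : ∀ j : ι, Γ j) (γ'i : Γ i),
      strictPart (r i) (m i (Function.update γ i γ'i)) (m i γ) →
      strictPart rP (Pot (Function.update γ i γ'i)) (Pot γ))
    (γstar : ∀ j : ι, Γ j)
    (hmin : ∀ γ : ∀ j : ι, Γ j, ¬ strictPart rP (Pot γ) (Pot γstar)) :
    ∀ (i : ι) (γ'i : Γ i),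
      ¬ strictPart (r i) (m i (Function.update γstar i γ'i)) (m i γstar) := by
  intro i g h
  exact hmin _ (hPot i γstar g h)
end

section
/- Consider a game with finitely many players indexed by a finite type ι, where each player i has a finite nonempty action set Γ_i, a metric map m_i : (∏_j Γ_j) → O_i, and a preorder ≾_i with strict part ≺_i on O_i. Suppose there exists a set P with a preorder whose strict part ≺_P is irreflexive and transitive, and a potential function Pot : Γ → P such that for every player i, every γ ∈ Γ, and every γ′_i ∈ Γ_i, if m_i(γ′_i, γ_{-i}) ≺_i m_i(γ) then Pot(γ′_i, γ_{-i}) ≺_P Pot(γ). Then the game admits a pure weak Nash equilibrium: there exists γ* ∈ Γ such that for every player i and every γ′_i ∈ Γ_i, it is not the case that m_i(γ′_i, γ*_{-i}) ≺_i m_i(γ*). -/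
/-- A finite game (finitely many players, finite nonempty action sets)
admitting a posetal potential `Pot` into a preordered set `P` (whose strict part is
irreflexive and transitive) has a pure weak Nash equilibrium. -/
theorem stmt_7 {ι : Type*} [Finite ι] [DecidableEq ι]
    {Γ O : ι → Type*} [∀ i, Finite (Γ i)] [∀ i, Nonempty (Γ i)]
    (m : ∀ i : ι, (∀ j : ι, Γ j) → O i)
    (r : ∀ i : ι, O i → O i → Prop)
    (hrefl : ∀ i, Reflexive (r i)) (htrans : ∀ i, Transitive (r i))
    (P : Type*) (rP : P → P → Prop) (hreflP : Reflexive rP) (htransP : Transitive rP)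
    (hirr : ∀ p : P, ¬ strictPart rP p p)
    (htransS : Transitive (strictPart rP))
    (Pot : (∀ j : ι, Γ j) → P)
    (hPot : ∀ (i : ι) (γ : ∀ j : ι, Γ j) (γ'i : Γ i),
      strictPart (r i) (m i (Function.update γ i γ'i)) (m i γ) →
      strictPart rP (Pot (Function.update γ i γ'i)) (Pot γ)) :
    ∃ γstar : ∀ j : ι, Γ j, ∀ (i : ι) (γ'i : Γ i),
      ¬ strictPart (r i) (m i (Function.update γstar i γ'i)) (m i γstar) := by
  let s : (∀ j, Γ j) → (∀ j, Γ j) → Prop := fun γ δ => strictPart rP (Pot γ) (Pot δ)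
  have : IsTrans _ s := ⟨fun a b c h1 h2 => htransS h1 h2⟩
  have : IsIrrefl _ s := ⟨fun a h => hirr _ h⟩
  have hwf : WellFounded s := Finite.wellFounded_of_trans_of_irrefl s
  obtain ⟨γstar, -, hmin⟩ := hwf.has_min Set.univ ⟨Classical.arbitrary _, trivial⟩
  exact ⟨γstar, fun i γ'i h => hmin _ trivial (hPot i γstar γ'i h)⟩
end

section
/- Consider the two-player game in which each player's action set is {0, 1} (equivalently, Bool) and each player's outcome lies in ℝ × ℝ ordered lexicographically (first coordinates compared first), with each player strictly preferring lexicographically smaller outcomes. The payoffs are: if both players choose the same action, player 1 receives (1, 1) and player 2 receives (1, 1); if they choose different actions, player 1 receives (0, 0) and player 2 receives (1.5, 1). Then this game has no pure weak Nash equilibrium: for every joint profile, some player has a unilateral deviation yielding a lexicographically strictly smaller outcome. -/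
/-- The strict lexicographic order on pairs of reals: first coordinates compared first,
ties broken by the second coordinates. -/
def lexLT (p q : ℝ × ℝ) : Prop :=
  p.1 < q.1 ∨ (p.1 = q.1 ∧ p.2 < q.2)

/-- The two-player game on `Bool` with outcomes in `ℝ × ℝ` ordered
lexicographically, where on matching actions both players receive `(1, 1)`, and on
mismatching actions player 1 receives `(0, 0)` and player 2 receives `(1.5, 1)`,
and each player strictly prefers lexicographically smaller outcomes, has no pure weak
Nash equilibrium: at every joint profile some player has a unilateral deviation
yielding a lexicographically strictly smaller outcome. -/
theorem stmt_9 (u₁ u₂ : Bool → Bool → ℝ × ℝ)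
    (h₁ : ∀ γ₁ γ₂ : Bool, u₁ γ₁ γ₂ = if γ₁ = γ₂ then (1, 1) else (0, 0))
    (h₂ : ∀ γ₁ γ₂ : Bool, u₂ γ₁ γ₂ = if γ₁ = γ₂ then (1, 1) else (1.5, 1)) :
    ∀ γ₁ γ₂ : Bool,
      (∃ γ₁' : Bool, lexLT (u₁ γ₁' γ₂) (u₁ γ₁ γ₂)) ∨
      (∃ γ₂' : Bool, lexLT (u₂ γ₁ γ₂') (u₂ γ₁ γ₂)) := by
  intro γ₁ γ₂
  by_cases h : γ₁ = γ₂
  · left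
    exact ⟨!γ₂, by simp [h₁, h, lexLT]⟩
  · right
    exact ⟨γ₁, by simp [h₂, h, lexLT]; norm_num⟩
end
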